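/- For every $x, y \in [0,1]$ with $y > 0$, the binary relative entropy satisfies $D\left(\frac{x+y}{1+y} \,\Big\|\, \frac{y}{1+y}\right) \ge \frac{x^2}{2y}\, B\!\left(\frac{x}{y}\right)$, where $B(u) = \frac{2[(1+u)\ln(1+u) - u]}{u^2}$ for $u > 0$. -/

import Mathlib

/-- Binary relative entropy (KL divergence between Bernoulli(p) and Bernoulli(q)). -/
noncomputable def binKL (p q : ℝ) : ℝ :=
  p * Real.log (p / q) + (1 - p) * Real.log ((1 - p) / (1 - q))

/-- The function `B(u) = 2[(1+u)ln(1+u) - u]/u²`. -/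
noncomputable def Bfun (u : ℝ) : ℝ := 2 * ((1 + u) * Real.log (1 + u) - u) / u ^ 2

/-!
Write `h(u) = (1+u) ln(1+u) - u` (Bennett's function), so that `u²/2 · B(u) = h(u)`. With
`u = x/y` the divergence equals `(y h(u) + x + (1-x) ln(1-x)) / (1+y)` and the left-hand side
equals `y h(u)`, so the claim reduces to `y² h(x/y) ≤ x + (1-x) ln(1-x)`. Both
`y² h(x/y) ≤ x²/2` and `x²/2 ≤ x + (1-x) ln(1-x)` follow from `ln s ≤ sinh (ln s) = (s - s⁻¹)/2`
for `s ≥ 1` and the reverse inequality for `s ≤ 1`, applied to `s = 1 + x/y` and `s = 1 - x`.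
-/

open Real

namespace Real

lemma two_mul_log_le_sub_inv {s : ℝ} (hs : 1 ≤ s) : 2 * log s ≤ s - s⁻¹ := by
  have := self_le_sinh_iff.mpr (log_nonneg hs)
  rw [sinh_log (by linarith)] at this
  linarith

lemma sub_inv_le_two_mul_log {s : ℝ} (hs0 : 0 < s) (hs1 : s ≤ 1) : s - s⁻¹ ≤ 2 * log s := by
  have := sinh_le_self_iff.mpr (log_nonpos hs0.le hs1)
  rw [sinh_log hs0] at this
  linarith

end Real

noncomputable def bennettH (u : ℝ) : ℝ := (1 + u) * log (1 + u) - u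

lemma sq_div_two_mul_Bfun (u : ℝ) : u ^ 2 / 2 * Bfun u = bennettH u := by
  rcases eq_or_ne u 0 with rfl | hu
  · simp [bennettH]
  · rw [Bfun, bennettH]
    field_simp

lemma bennettH_le_sq_div_two {u : ℝ} (hu : 0 ≤ u) : bennettH u ≤ u ^ 2 / 2 := by
  have hs : 0 < 1 + u := by linarith
  have := mul_le_mul_of_nonneg_left (two_mul_log_le_sub_inv (by linarith : 1 ≤ 1 + u)) hs.le
  rw [mul_sub, mul_inv_cancel₀ hs.ne'] at this
  rw [bennettH]
  nlinarith

lemma sq_div_two_le_add_mul_log_one_sub {x : ℝ} (hx0 : 0 ≤ x) (hx1 : x ≤ 1) :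
    x ^ 2 / 2 ≤ x + (1 - x) * log (1 - x) := by
  rcases eq_or_lt_of_le hx1 with rfl | hx1
  · norm_num
  have ht : 0 < 1 - x := by linarith
  have := mul_le_mul_of_nonneg_left (sub_inv_le_two_mul_log ht (by linarith)) ht.le
  rw [mul_sub, mul_inv_cancel₀ ht.ne'] at this
  nlinarith

lemma binKL_shift {x y : ℝ} (hy : 0 < y) :
    binKL ((x + y) / (1 + y)) (y / (1 + y))
      = (y * bennettH (x / y) + x + (1 - x) * log (1 - x)) / (1 + y) := by
  have h1y : 1 + y ≠ 0 := by positivity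
  have hp : (x + y) / (1 + y) / (y / (1 + y)) = 1 + x / y := by field_simp; ring
  have hr : (1 - (x + y) / (1 + y)) / (1 - y / (1 + y)) = 1 - x := by field_simp; ring
  rw [binKL, hp, hr, bennettH]
  field_simp
  ring

theorem stmt_5_general (x y : ℝ) (hx : x ∈ Set.Icc (0:ℝ) 1)
    (hy0 : 0 < y) :
    x ^ 2 / (2 * y) * Bfun (x / y) ≤ binKL ((x + y) / (1 + y)) (y / (1 + y)) := by
  obtain ⟨hx0, hx1⟩ := hx
  have hlhs : x ^ 2 / (2 * y) * Bfun (x / y) = y * bennettH (x / y) := by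
    rw [← sq_div_two_mul_Bfun]
    field_simp
  have hbennett : y ^ 2 * bennettH (x / y) ≤ x ^ 2 / 2 :=
    calc y ^ 2 * bennettH (x / y) ≤ y ^ 2 * ((x / y) ^ 2 / 2) := by
          gcongr
          exact bennettH_le_sq_div_two (by positivity)
      _ = x ^ 2 / 2 := by field_simp
  have hentropy := sq_div_two_le_add_mul_log_one_sub hx0 hx1
  rw [hlhs, binKL_shift hy0, le_div_iff₀ (by positivity)]
  nlinarith

/-- lower bound on the divergence. -/
theorem stmt_5 (x y : ℝ) (hx : x ∈ Set.Icc (0:ℝ) 1) (hy : y ∈ Set.Icc (0:ℝ) 1)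
    (hy0 : 0 < y) :
    x ^ 2 / (2 * y) * Bfun (x / y) ≤ binKL ((x + y) / (1 + y)) (y / (1 + y)) :=
  stmt_5_general x y hx hy0
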